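/- arXiv:2103.16464 — 6 statements merged into one kernel-verified Lean document; each statement's English description precedes it below -/
import Mathlib

section
/- Let f be a free deformation retraction of P onto Q, let F(x,t) = (f(x,t), t) and M := F(P × I). Then F is injective on F⁻¹(int M), where int M denotes the interior of M in the topological space P × I (with the subspace topology from E × ℝ). -/
open Set

/-- `f : E × ℝ → E` (restricted to `P × [0,1]`) is a free deformation retraction of the
compact set `P` onto `Q ⊆ P`. -/
def IsFreeDefRetr {E : Type*} [NormedAddCommGroup E] [NormedSpace ℝ E]
    (P Q : Set E) (f : E × ℝ → E) : Prop :=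
  ContinuousOn f (P ×ˢ Set.Icc (0 : ℝ) 1) ∧
  Set.MapsTo f (P ×ˢ Set.Icc (0 : ℝ) 1) P ∧
  (∀ x ∈ P, f (x, 0) = x) ∧
  f '' (P ×ˢ ({1} : Set ℝ)) = Q ∧
  (∀ q ∈ Q, ∀ t ∈ Set.Icc (0 : ℝ) 1, f (q, t) = q) ∧
  (∀ x ∈ P, ∀ s ∈ Set.Icc (0 : ℝ) 1, ∀ t ∈ Set.Icc (0 : ℝ) 1,
    f (f (x, s), t) = f (x, max s t))


/-- The interior of `N` within the subspace `X` (subspace topology):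
points of `X` having an ambient-open neighbourhood `V` with `V ∩ X ⊆ N`. -/
def interiorIn {α : Type*} [TopologicalSpace α] (X N : Set α) : Set α :=
  X ∩ {p | ∃ V : Set α, IsOpen V ∧ p ∈ V ∧ V ∩ X ⊆ N}

/-!
If `F (x, s)` is an interior point of `M`, then every point `w` of `P` near `z = f (x, s)`
has `(w, s) ∈ M`, i.e. `w` lies in the image of `f (·, s)`, which `f (·, s)` fixes pointwise.
Along the path `t ↦ f (x, t)`, `t ∈ [0, s]`, every point `w` satisfies `f (w, s) = z`, so the
only point of the path near `z` is `z` itself; the path being connected, it is constant, and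
`x = f (x, 0) = z`. Hence `F (x, s)` determines `x`.
-/

theorem IsPreconnected.subset_singleton_of_inter_subset {X : Type*} [TopologicalSpace X]
    [T1Space X] {S U : Set X} {z : X} (hS : IsPreconnected S) (hz : z ∈ S) (hU : IsOpen U)
    (hzU : z ∈ U) (hSU : S ∩ U ⊆ {z}) : S ⊆ {z} := by
  have hcover : S ⊆ U ∪ {z}ᶜ := fun w _ => (em (w = z)).imp (fun hwz : w = z => hwz ▸ hzU) id
  have hdisj : S ∩ (U ∩ {z}ᶜ) = ∅ :=
    eq_empty_of_forall_notMem fun w ⟨hw, hwU, hwz⟩ => hwz (hSU ⟨hw, hwU⟩)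
  rcases isPreconnected_iff_subset_of_disjoint.1 hS U {z}ᶜ hU isOpen_compl_singleton
    hcover hdisj with hSU' | hSz
  · exact fun w hw => hSU ⟨hw, hSU' hw⟩
  · exact absurd rfl (hSz hz)

section FreeDeformation

variable {X : Type*} [TopologicalSpace X] {P : Set X} {f : X × ℝ → X}

theorem exists_isOpen_fixed_of_mem_interiorIn
    (hsemi : ∀ x ∈ P, ∀ s ∈ Icc (0 : ℝ) 1, ∀ t ∈ Icc (0 : ℝ) 1,
      f (f (x, s), t) = f (x, max s t))
    {z : X} {s : ℝ} (hs : s ∈ Icc (0 : ℝ) 1)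
    (hz : (z, s) ∈ interiorIn (P ×ˢ Icc (0 : ℝ) 1) ((fun p => (f p, p.2)) '' (P ×ˢ Icc 0 1))) :
    ∃ U : Set X, IsOpen U ∧ z ∈ U ∧ ∀ w ∈ U ∩ P, f (w, s) = w := by
  obtain ⟨-, V, hV, hzV, hVM⟩ := hz
  refine ⟨(fun w => (w, s)) ⁻¹' V, hV.preimage (by fun_prop), hzV, ?_⟩
  rintro w ⟨hwV, hwP⟩
  obtain ⟨⟨v, u⟩, ⟨hv, hu⟩, hvu⟩ := hVM ⟨hwV, hwP, hs⟩
  obtain ⟨rfl, rfl⟩ := Prod.ext_iff.1 hvu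
  simpa using hsemi v hv u hu u hu

theorem apply_eq_self_of_isOpen_fixed [T1Space X]
    (hcont : ContinuousOn f (P ×ˢ Icc (0 : ℝ) 1)) (hmaps : MapsTo f (P ×ˢ Icc (0 : ℝ) 1) P)
    (hf0 : ∀ x ∈ P, f (x, 0) = x)
    (hsemi : ∀ x ∈ P, ∀ s ∈ Icc (0 : ℝ) 1, ∀ t ∈ Icc (0 : ℝ) 1,
      f (f (x, s), t) = f (x, max s t))
    {x : X} {s : ℝ} (hx : x ∈ P) (hs : s ∈ Icc (0 : ℝ) 1) {U : Set X} (hU : IsOpen U)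
    (hxsU : f (x, s) ∈ U) (hfix : ∀ w ∈ U ∩ P, f (w, s) = w) : f (x, s) = x := by
  have hsub : Icc 0 s ⊆ Icc (0 : ℝ) 1 := Icc_subset_Icc_right hs.2
  have hpath : IsPreconnected ((fun t => f (x, t)) '' Icc 0 s) :=
    isPreconnected_Icc.image _ <|
      hcont.comp (by fun_prop) fun t ht => ⟨hx, hsub ht⟩
  have hpath_near : (fun t => f (x, t)) '' Icc 0 s ∩ U ⊆ {f (x, s)} := by
    rintro _ ⟨⟨t, ht, rfl⟩, htU⟩
    have hxt : f (x, t) ∈ P := hmaps ⟨hx, hsub ht⟩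
    rw [mem_singleton_iff, ← hfix _ ⟨htU, hxt⟩, hsemi x hx t (hsub ht) s hs, max_eq_right ht.2]
  have hconst := hpath.subset_singleton_of_inter_subset
    ⟨s, ⟨hs.1, le_rfl⟩, rfl⟩ hU hxsU hpath_near
  have : f (x, 0) = f (x, s) := hconst ⟨0, ⟨le_rfl, hs.1⟩, rfl⟩
  rw [← this, hf0 x hx]

theorem apply_eq_self_of_mem_interiorIn [T1Space X]
    (hcont : ContinuousOn f (P ×ˢ Icc (0 : ℝ) 1)) (hmaps : MapsTo f (P ×ˢ Icc (0 : ℝ) 1) P)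
    (hf0 : ∀ x ∈ P, f (x, 0) = x)
    (hsemi : ∀ x ∈ P, ∀ s ∈ Icc (0 : ℝ) 1, ∀ t ∈ Icc (0 : ℝ) 1,
      f (f (x, s), t) = f (x, max s t))
    {x : X} {s : ℝ} (hx : x ∈ P) (hs : s ∈ Icc (0 : ℝ) 1)
    (hint : (f (x, s), s) ∈
      interiorIn (P ×ˢ Icc (0 : ℝ) 1) ((fun p => (f p, p.2)) '' (P ×ˢ Icc 0 1))) :
    f (x, s) = x :=
  let ⟨_, hU, hxsU, hfix⟩ := exists_isOpen_fixed_of_mem_interiorIn hsemi hs hint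
  apply_eq_self_of_isOpen_fixed hcont hmaps hf0 hsemi hx hs hU hxsU hfix

end FreeDeformation

theorem stmt_3_general {E : Type*} [NormedAddCommGroup E] [NormedSpace ℝ E]
    {P Q : Set E}
    (f : E × ℝ → E) (hf : IsFreeDefRetr P Q f)
    (F : E × ℝ → E × ℝ) (hF : ∀ p, F p = (f p, p.2))
    (M : Set (E × ℝ)) (hM : M = F '' (P ×ˢ Set.Icc (0 : ℝ) 1)) :
    Set.InjOn F
      ((P ×ˢ Set.Icc (0 : ℝ) 1) ∩ F ⁻¹' (interiorIn (P ×ˢ Set.Icc (0 : ℝ) 1) M)) := by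
  obtain ⟨hcont, hmaps, hf0, -, -, hsemi⟩ := hf
  obtain rfl : F = fun p => (f p, p.2) := funext hF
  subst hM
  rintro ⟨x, s⟩ ⟨⟨hx, hs⟩, hxint⟩ ⟨y, t⟩ ⟨⟨hy, ht⟩, hyint⟩ hxy
  simp only [mem_preimage, Prod.mk.injEq] at hxint hyint hxy
  obtain ⟨hfxy, rfl⟩ := hxy
  refine Prod.ext ?_ rfl
  calc x = f (x, s) := (apply_eq_self_of_mem_interiorIn hcont hmaps hf0 hsemi hx hs hxint).symm
    _ = f (y, s) := hfxy
    _ = y := apply_eq_self_of_mem_interiorIn hcont hmaps hf0 hsemi hy ht hyint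

/-- `F` is injective on `F⁻¹ (int M)`, where `int M` is the interior of `M` in the
subspace `P × I` of `E × ℝ`. -/
theorem stmt_3 {E : Type*} [NormedAddCommGroup E] [NormedSpace ℝ E] [FiniteDimensional ℝ E]
    {P Q : Set E} (hP : IsCompact P) (hQP : Q ⊆ P)
    (f : E × ℝ → E) (hf : IsFreeDefRetr P Q f)
    (F : E × ℝ → E × ℝ) (hF : ∀ p, F p = (f p, p.2))
    (M : Set (E × ℝ)) (hM : M = F '' (P ×ˢ Set.Icc (0 : ℝ) 1)) :
    Set.InjOn F
      ((P ×ˢ Set.Icc (0 : ℝ) 1) ∩ F ⁻¹' (interiorIn (P ×ˢ Set.Icc (0 : ℝ) 1) M)) :=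
  stmt_3_general f hf F hF M hM
end

section
/- Let f be a free deformation retraction of P onto Q, let F(x,t) = (f(x,t), t) and M := F(P × I). Then F⁻¹(int M) = int M, where int M denotes the interior of M in the topological space P × I. -/
open Set

/-!
Since `f (f (x, s), s) = f (x, s)`, the image `M` consists exactly of the fixed points of `F` in
`P × I`. If `F (x, t) = (y, t)` is interior to `M`, then `f (·, t)` fixes `P` near `y`. It also
collapses the trajectory `f (x, [0, t])` onto `y`, so this connected set meets a neighbourhood of
`y` only in `y`; hence it is `{y}` and `x = f (x, 0) = y`.
-/

open Topology

theorem IsPreconnected.eq_singleton_of_inter_nhds_subset {X : Type*} [TopologicalSpace X]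
    [T1Space X] {S U : Set X} {y : X} (hS : IsPreconnected S) (hyS : y ∈ S) (hU : U ∈ 𝓝 y)
    (hSU : S ∩ U ⊆ {y}) : S = {y} := by
  have hcover : S ⊆ {y} ∪ (interior U)ᶜ := fun z hz => by
    by_cases hzU : z ∈ interior U
    · exact Or.inl (hSU ⟨hz, interior_subset hzU⟩)
    · exact Or.inr hzU
  have hS_interior : S ⊆ interior U := fun z hz => by
    by_contra hzU
    obtain ⟨w, -, rfl, hw⟩ := isPreconnected_closed_iff.1 hS _ _ isClosed_singleton
      isOpen_interior.isClosed_compl hcover ⟨y, hyS, rfl⟩ ⟨z, hz, hzU⟩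
    exact hw (mem_interior_iff_mem_nhds.2 hU)
  exact Subset.antisymm (fun z hz => hSU ⟨hz, interior_subset (hS_interior hz)⟩)
    (singleton_subset_iff.2 hyS)

namespace IsFreeDefRetr

variable {E : Type*} [NormedAddCommGroup E] [NormedSpace ℝ E] {P Q : Set E} {f : E × ℝ → E}

protected theorem continuousOn (hf : IsFreeDefRetr P Q f) :
    ContinuousOn f (P ×ˢ Icc 0 1) :=
  hf.1

protected theorem mapsTo (hf : IsFreeDefRetr P Q f) : MapsTo f (P ×ˢ Icc 0 1) P :=
  hf.2.1

theorem apply_zero (hf : IsFreeDefRetr P Q f) {x : E} (hx : x ∈ P) : f (x, 0) = x :=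
  hf.2.2.1 x hx

theorem apply_apply_of_le (hf : IsFreeDefRetr P Q f) {x : E} {s t : ℝ} (hx : x ∈ P)
    (hs : 0 ≤ s) (hst : s ≤ t) (ht : t ≤ 1) : f (f (x, s), t) = f (x, t) := by
  rw [hf.2.2.2.2.2 x hx s ⟨hs, hst.trans ht⟩ t ⟨hs.trans hst, ht⟩, max_eq_right hst]

theorem mem_image_graph_iff (hf : IsFreeDefRetr P Q f) {p : E × ℝ} :
    p ∈ (fun q => (f q, q.2)) '' (P ×ˢ Icc 0 1) ↔ p ∈ P ×ˢ Icc 0 1 ∧ f p = p.1 := by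
  constructor
  · rintro ⟨⟨x, s⟩, ⟨hx, hs⟩, rfl⟩
    exact ⟨⟨hf.mapsTo ⟨hx, hs⟩, hs⟩, hf.apply_apply_of_le hx hs.1 le_rfl hs.2⟩
  · rintro ⟨hp, hfp⟩
    exact ⟨p, hp, Prod.ext hfp rfl⟩

theorem isPreconnected_trajectory (hf : IsFreeDefRetr P Q f) {x : E} {t : ℝ} (hx : x ∈ P)
    (ht : t ≤ 1) : IsPreconnected ((fun s => f (x, s)) '' Icc 0 t) :=
  isPreconnected_Icc.image _ <| hf.continuousOn.comp (Continuous.prodMk_right x).continuousOn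
    fun _ hs => ⟨hx, hs.1, hs.2.trans ht⟩

theorem apply_eq_self_of_eventually_fixed (hf : IsFreeDefRetr P Q f) {x : E} {t : ℝ}
    {U : Set E} (hx : x ∈ P) (ht : t ∈ Icc (0 : ℝ) 1) (hU : U ∈ 𝓝 (f (x, t)))
    (hfix : ∀ z ∈ P ∩ U, f (z, t) = z) : f (x, t) = x := by
  have htraj : (fun s => f (x, s)) '' Icc 0 t = {f (x, t)} := by
    refine (hf.isPreconnected_trajectory hx ht.2).eq_singleton_of_inter_nhds_subset
      ⟨t, ⟨ht.1, le_rfl⟩, rfl⟩ hU ?_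
    rintro _ ⟨⟨s, hs, rfl⟩, hsU⟩
    rw [← hf.apply_apply_of_le hx hs.1 hs.2 ht.2,
      hfix _ ⟨hf.mapsTo ⟨hx, hs.1, hs.2.trans ht.2⟩, hsU⟩]
    rfl
  have hx0 : f (x, 0) ∈ (fun s => f (x, s)) '' Icc 0 t := ⟨0, ⟨le_rfl, ht.1⟩, rfl⟩
  rw [htraj, hf.apply_zero hx] at hx0
  exact hx0.symm

end IsFreeDefRetr

theorem stmt_4_general {E : Type*} [NormedAddCommGroup E] [NormedSpace ℝ E]
    {P Q : Set E}
    (f : E × ℝ → E) (hf : IsFreeDefRetr P Q f)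
    (F : E × ℝ → E × ℝ) (hF : ∀ p, F p = (f p, p.2))
    (M : Set (E × ℝ)) (hM : M = F '' (P ×ˢ Set.Icc (0 : ℝ) 1)) :
    (P ×ˢ Set.Icc (0 : ℝ) 1) ∩ F ⁻¹' (interiorIn (P ×ˢ Set.Icc (0 : ℝ) 1) M) =
      interiorIn (P ×ˢ Set.Icc (0 : ℝ) 1) M := by
  obtain rfl : F = fun p => (f p, p.2) := funext hF
  subst hM
  ext p
  constructor
  · rintro ⟨hp, hFp⟩
    obtain ⟨-, V, hV, hFpV, hVM⟩ := id hFp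
    have hfix : f p = p.1 :=
      hf.apply_eq_self_of_eventually_fixed hp.1 hp.2
        ((hV.preimage (Continuous.prodMk_left p.2)).mem_nhds hFpV)
        fun z hz => (hf.mem_image_graph_iff.1 (hVM ⟨hz.2, hz.1, hp.2⟩)).2
    rwa [mem_preimage, show (f p, p.2) = p from Prod.ext hfix rfl] at hFp
  · intro hp
    obtain ⟨-, V, -, hpV, hVM⟩ := id hp
    have hfix : f p = p.1 := (hf.mem_image_graph_iff.1 (hVM ⟨hpV, hp.1⟩)).2
    exact ⟨hp.1, by rwa [mem_preimage, show (f p, p.2) = p from Prod.ext hfix rfl]⟩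

/-- `F⁻¹ (int M) = int M`, where `int M` is the interior of `M` in the subspace `P × I`
and the preimage is taken inside the domain `P × I` of `F`. -/
theorem stmt_4 {E : Type*} [NormedAddCommGroup E] [NormedSpace ℝ E] [FiniteDimensional ℝ E]
    {P Q : Set E} (hP : IsCompact P) (hQP : Q ⊆ P)
    (f : E × ℝ → E) (hf : IsFreeDefRetr P Q f)
    (F : E × ℝ → E × ℝ) (hF : ∀ p, F p = (f p, p.2))
    (M : Set (E × ℝ)) (hM : M = F '' (P ×ˢ Set.Icc (0 : ℝ) 1)) :
    (P ×ˢ Set.Icc (0 : ℝ) 1) ∩ F ⁻¹' (interiorIn (P ×ˢ Set.Icc (0 : ℝ) 1) M) =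
      interiorIn (P ×ˢ Set.Icc (0 : ℝ) 1) M :=
  stmt_4_general f hf F hF M hM
end

section
/- Let f be a free deformation retraction of P onto Q. Let N₂ ⊆ N₁ ⊆ P × I with N₂ upward closed. Set D := f(N₁) \ f(N₂) and L := f⁻¹(D) ∩ N₁. Then f(S₋(L)) ∩ f(N₂) = ∅, where S₋(L) := {(x,t) ∈ P × I : ∃ s ∈ I, t ≤ s and (x,s) ∈ L} is the shadow of L. -/
/-!
The semiflow law `f (f (x, s), t) = f (x, max s t)` makes the image of an upward closed set
forward invariant: if `f (x, t) = f (z, u)` with `(z, u) ∈ N₂` and `t ≤ s`, then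
`f (x, s) = f (f (x, t), s) = f (f (z, u), s) = f (z, max u s)`, and `(z, max u s) ∈ N₂`.
A point of the shadow of `L` lies below some `(x, s) ∈ L`, whose image avoids `f '' N₂`
by the definition of `D`, so no point of the shadow can map into `f '' N₂`.
-/

open Set

namespace IsFreeDefRetr

variable {E : Type*} [NormedAddCommGroup E] [NormedSpace ℝ E] {P Q : Set E} {f : E × ℝ → E}

theorem apply_max_of_apply_eq (hf : IsFreeDefRetr P Q f) {x z : E} (hx : x ∈ P) (hz : z ∈ P)
    {t u s : ℝ} (ht : t ∈ Icc (0 : ℝ) 1) (hu : u ∈ Icc (0 : ℝ) 1) (hs : s ∈ Icc (0 : ℝ) 1)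
    (hts : t ≤ s) (h : f (x, t) = f (z, u)) : f (x, s) = f (z, max u s) := by
  obtain ⟨-, -, -, -, -, hsemi⟩ := hf
  calc f (x, s) = f (x, max t s) := by rw [max_eq_right hts]
    _ = f (f (x, t), s) := (hsemi x hx t ht s hs).symm
    _ = f (f (z, u), s) := by rw [h]
    _ = f (z, max u s) := hsemi z hz u hu s hs

theorem apply_mem_image_of_le (hf : IsFreeDefRetr P Q f) {N : Set (E × ℝ)}
    (hN : N ⊆ P ×ˢ Icc (0 : ℝ) 1)
    (hNup : ∀ (x : E) (t s : ℝ), (x, t) ∈ N → t ≤ s → s ≤ 1 → (x, s) ∈ N)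
    {x : E} {t s : ℝ} (hxt : (x, t) ∈ P ×ˢ Icc (0 : ℝ) 1) (hs : s ∈ Icc (0 : ℝ) 1)
    (hts : t ≤ s) (hfxt : f (x, t) ∈ f '' N) : f (x, s) ∈ f '' N := by
  obtain ⟨⟨z, u⟩, hzu, hfzu⟩ := hfxt
  obtain ⟨hz, hu⟩ := hN hzu
  refine ⟨(z, max u s), hNup z u _ hzu (le_max_left u s) (max_le hu.2 hs.2), ?_⟩
  exact (hf.apply_max_of_apply_eq hxt.1 hz hxt.2 hu hs hts hfzu.symm).symm

end IsFreeDefRetr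

theorem stmt_5_general {E : Type*} [NormedAddCommGroup E] [NormedSpace ℝ E]
    {P Q : Set E}
    (f : E × ℝ → E) (hf : IsFreeDefRetr P Q f)
    (N₁ N₂ : Set (E × ℝ)) (hN21 : N₂ ⊆ N₁) (hN1 : N₁ ⊆ P ×ˢ Set.Icc (0 : ℝ) 1)
    (hN2up : ∀ (x : E) (t s : ℝ), (x, t) ∈ N₂ → t ≤ s → s ≤ 1 → (x, s) ∈ N₂)
    (D : Set E) (hD : D = f '' N₁ \ f '' N₂)
    (L : Set (E × ℝ)) (hL : L = f ⁻¹' D ∩ N₁)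
    (Lsh : Set (E × ℝ))
    (hLsh : Lsh = {p : E × ℝ | p ∈ P ×ˢ Set.Icc (0 : ℝ) 1 ∧
      ∃ s ∈ Set.Icc (0 : ℝ) 1, p.2 ≤ s ∧ (p.1, s) ∈ L}) :
    f '' Lsh ∩ f '' N₂ = ∅ := by
  subst hLsh hL hD
  refine eq_empty_of_forall_notMem ?_
  rintro _ ⟨⟨⟨x, t⟩, ⟨hxt, s, hs, hts, ⟨-, hfxs⟩, -⟩, rfl⟩, hfxt⟩
  exact hfxs (hf.apply_mem_image_of_le (hN21.trans hN1) hN2up hxt hs hts hfxt)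

/-- Let `N₂ ⊆ N₁ ⊆ P × I` with `N₂` upward closed, `D := f '' N₁ \ f '' N₂`, and
`L := f⁻¹ D ∩ N₁`. Then `f '' S₋(L) ∩ f '' N₂ = ∅`, where
`S₋(L) = {(x,t) ∈ P × I | ∃ s ∈ I, t ≤ s ∧ (x,s) ∈ L}` is the shadow of `L`. -/
theorem stmt_5 {E : Type*} [NormedAddCommGroup E] [NormedSpace ℝ E] [FiniteDimensional ℝ E]
    {P Q : Set E} (hP : IsCompact P) (hQP : Q ⊆ P)
    (f : E × ℝ → E) (hf : IsFreeDefRetr P Q f)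
    (N₁ N₂ : Set (E × ℝ)) (hN21 : N₂ ⊆ N₁) (hN1 : N₁ ⊆ P ×ˢ Set.Icc (0 : ℝ) 1)
    (hN2up : ∀ (x : E) (t s : ℝ), (x, t) ∈ N₂ → t ≤ s → s ≤ 1 → (x, s) ∈ N₂)
    (D : Set E) (hD : D = f '' N₁ \ f '' N₂)
    (L : Set (E × ℝ)) (hL : L = f ⁻¹' D ∩ N₁)
    (Lsh : Set (E × ℝ))
    (hLsh : Lsh = {p : E × ℝ | p ∈ P ×ˢ Set.Icc (0 : ℝ) 1 ∧
      ∃ s ∈ Set.Icc (0 : ℝ) 1, p.2 ≤ s ∧ (p.1, s) ∈ L}) :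
    f '' Lsh ∩ f '' N₂ = ∅ :=
  stmt_5_general f hf N₁ N₂ hN21 hN1 hN2up D hD L hL Lsh hLsh
end

section
/- Let x₀, x₁, …, xₙ (n ≥ 1) be affinely independent points of E, let A := conv{x₀, …, xₙ} and let B := conv{x₁, …, xₙ} be the face of A opposite the vertex x₀. Suppose Q ⊆ E is compact, P := Q ∪ A, and Q ∩ A = A \ (ri A ∪ ri B), where ri denotes the relative (intrinsic) interior. Then there exists a free deformation retraction h : P × I → P of P onto Q, i.e. a continuous map with h(x,0) = x for all x ∈ P, h(P × {1}) = Q, h(q,t) = q for all q ∈ Q and t ∈ I, and h(h(x,s),t) = h(x, max(s,t)) for all x ∈ P and s,t ∈ I. -/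
open Set

/-!
Let `λ₀, …, λₙ` be barycentric coordinates of the simplex `A`, extended to affine functions on
`E`. The relative interior of `A` is `{λᵢ > 0 for all i}` and that of `B` is
`{λ₀ = 0, λᵢ > 0 for i ≥ 1}`, so `Q ∩ A` is where `m := min_{i ≥ 1} λᵢ` vanishes. Moving from
the barycentre of `B` towards `x₀` lowers every `λᵢ`, `i ≥ 1`, at the same rate `1/n` and keeps
us in `A` until `m` reaches `0`, so `u := 1 - n m` increases at unit speed along this direction.
A point `y ∈ A` rests until time `u y` and then moves in that direction: at time `t` it has
`u = max (u y) t`, so it lies in `Q` at time `1`, points of `Q` never move, and the semigroup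
law reduces to the associativity of `max`.
-/

theorem AffineMap.apply_sum_smul {ι E F : Type*} [Fintype ι] [AddCommGroup E] [Module ℝ E]
    [AddCommGroup F] [Module ℝ F] (f : E →ᵃ[ℝ] F) {w : ι → ℝ} (hw : ∑ i, w i = 1) (p : ι → E) :
    f (∑ i, w i • p i) = ∑ i, w i • f (p i) := by
  rw [← Finset.univ.affineCombination_eq_linear_combination p w hw,
    Finset.map_affineCombination _ _ _ hw, Finset.affineCombination_eq_linear_combination _ _ _ hw]
  rfl

theorem AffineMap.apply_add_smul_sub {E : Type*} [AddCommGroup E] [Module ℝ E]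
    (f : E →ᵃ[ℝ] ℝ) (y a b : E) (τ : ℝ) : f (y + τ • (a - b)) = f y + τ * (f a - f b) := by
  rw [add_comm, ← vadd_eq_add, AffineMap.map_vadd, map_smul, ← vsub_eq_sub,
    AffineMap.linearMap_vsub]
  simp [add_comm]

theorem sum_smul_mem_affineSpan {ι E : Type*} [Fintype ι] [AddCommGroup E] [Module ℝ E]
    {p : ι → E} {w : ι → ℝ} (hw : ∑ i, w i = 1) : ∑ i, w i • p i ∈ affineSpan ℝ (range p) := by
  rw [← Finset.univ.affineCombination_eq_linear_combination p w hw]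
  exact affineCombination_mem_affineSpan hw p

open Filter Topology in
theorem AffineMap.eq_zero_of_mem_intrinsicInterior {E : Type*} [NormedAddCommGroup E]
    [NormedSpace ℝ E] {C : Set E} {φ : E →ᵃ[ℝ] ℝ} (hφ : ∀ z ∈ C, 0 ≤ φ z) {y z : E}
    (hy : y ∈ intrinsicInterior ℝ C) (hy0 : φ y = 0) (hz : z ∈ C) : φ z = 0 := by
  obtain ⟨y, hyC, rfl⟩ := mem_intrinsicInterior.1 hy
  let γ : ℝ → affineSpan ℝ C := fun t =>
    ⟨AffineMap.lineMap z y t, AffineMap.lineMap_mem t (subset_affineSpan ℝ C hz) y.2⟩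
  have hγ : Tendsto γ (𝓝[>] 1) (𝓝 y) := by
    have h1 : γ 1 = y := Subtype.ext (AffineMap.lineMap_apply_one _ _)
    exact h1 ▸ (AffineMap.lineMap_continuous.subtype_mk _).continuousAt.tendsto.mono_left
      nhdsWithin_le_nhds
  -- Beyond `y`, the line from `z` through `y` stays in `C`, where `φ = (1 - t) φ z ≥ 0`.
  obtain ⟨t, ht, ht1⟩ :=
    ((hγ.eventually_mem (isOpen_interior.mem_nhds hyC)).and self_mem_nhdsWithin).exists
  have h : 0 ≤ φ (AffineMap.lineMap z y t) := hφ _ (interior_subset ht :)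
  rw [AffineMap.apply_lineMap, hy0, AffineMap.lineMap_apply_module, smul_zero, add_zero,
    smul_eq_mul] at h
  nlinarith [hφ z hz]

section BarycentricCoords

variable {ι E : Type*} [DecidableEq ι]

def IsBarycentricCoords [AddCommGroup E] [Module ℝ E] (c : ι → E →ᵃ[ℝ] ℝ) (p : ι → E) : Prop :=
  ∀ i j, c i (p j) = if i = j then 1 else 0

theorem AffineIndependent.exists_isBarycentricCoords [AddCommGroup E] [Module ℝ E] {p : ι → E}
    (hp : AffineIndependent ℝ p) : ∃ c : ι → E →ᵃ[ℝ] ℝ, IsBarycentricCoords c p := by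
  classical
  obtain ⟨t, hpt, ht, hspan⟩ := exists_subset_affineIndependent_affineSpan_eq_top hp.range
  let b : AffineBasis t ℝ E := ⟨(↑), ht, by rwa [Subtype.range_coe]⟩
  refine ⟨fun i => b.coord ⟨p i, hpt (mem_range_self i)⟩, fun i j => ?_⟩
  have h := b.coord_apply ⟨p i, hpt (mem_range_self i)⟩ ⟨p j, hpt (mem_range_self j)⟩
  simp only [Subtype.mk.injEq, hp.injective.eq_iff] at h
  exact h

namespace IsBarycentricCoords

theorem comp [AddCommGroup E] [Module ℝ E] {κ : Type*} [DecidableEq κ] {c : ι → E →ᵃ[ℝ] ℝ}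
    {p : ι → E} (hc : IsBarycentricCoords c p) {e : κ → ι} (he : Function.Injective e) :
    IsBarycentricCoords (fun k => c (e k)) (fun k => p (e k)) := fun k l => by
  simp [hc (e k) (e l), he.eq_iff]

section Algebraic

variable [Fintype ι] [AddCommGroup E] [Module ℝ E] {c : ι → E →ᵃ[ℝ] ℝ} {p : ι → E}

theorem apply_sum_smul (hc : IsBarycentricCoords c p) {w : ι → ℝ} (hw : ∑ i, w i = 1) (i : ι) :
    c i (∑ j, w j • p j) = w i := by
  simp [AffineMap.apply_sum_smul _ hw, hc i]

theorem sum_smul_of_mem_affineSpan (hc : IsBarycentricCoords c p) {y : E}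
    (hy : y ∈ affineSpan ℝ (range p)) : ∑ i, c i y = 1 ∧ ∑ i, c i y • p i = y := by
  obtain ⟨w, hw, rfl⟩ := eq_affineCombination_of_mem_affineSpan_of_fintype hy
  rw [Finset.univ.affineCombination_eq_linear_combination p w hw]
  simpa only [hc.apply_sum_smul hw, and_true] using hw

theorem mem_convexHull_iff (hc : IsBarycentricCoords c p) {y : E} :
    y ∈ convexHull ℝ (range p) ↔ y ∈ affineSpan ℝ (range p) ∧ ∀ i, 0 ≤ c i y := by
  refine ⟨fun hy => convexHull_min (t := affineSpan ℝ (range p) ∩ ⋂ i, c i ⁻¹' Ici 0) ?_ ?_ hy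
    |>.imp_right mem_iInter.1, fun ⟨hyS, hy0⟩ => ?_⟩
  · rintro - ⟨j, rfl⟩
    refine ⟨subset_affineSpan ℝ _ (mem_range_self j), mem_iInter.2 fun i => ?_⟩
    simp only [mem_preimage, mem_Ici, hc i j]
    split_ifs <;> norm_num
  · exact (AffineSubspace.convex _).inter
      (convex_iInter fun i => (convex_Ici 0).affine_preimage (c i))
  · obtain ⟨hsum, hy⟩ := hc.sum_smul_of_mem_affineSpan hyS
    exact mem_convexHull_of_exists_fintype _ p hy0 hsum mem_range_self hy

end Algebraic

section Topological

variable [NormedAddCommGroup E] [NormedSpace ℝ E] [FiniteDimensional ℝ E]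

theorem mem_intrinsicInterior_convexHull_iff [Fintype ι] {c : ι → E →ᵃ[ℝ] ℝ} {p : ι → E}
    (hc : IsBarycentricCoords c p) {y : E} :
    y ∈ intrinsicInterior ℝ (convexHull ℝ (range p)) ↔
      y ∈ affineSpan ℝ (range p) ∧ ∀ i, 0 < c i y := by
  constructor
  · intro hy
    obtain ⟨hyS, hy0⟩ := hc.mem_convexHull_iff.1 (intrinsicInterior_subset hy)
    refine ⟨hyS, fun i => (hy0 i).lt_of_ne' fun h => ?_⟩
    have := (c i).eq_zero_of_mem_intrinsicInterior (fun z hz => (hc.mem_convexHull_iff.1 hz).2 i)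
      hy h (subset_convexHull ℝ _ (mem_range_self i))
    simp [hc i i] at this
  · rintro ⟨hyS, hy0⟩
    refine mem_intrinsicInterior.2 ⟨⟨y, by rwa [affineSpan_convexHull]⟩, ?_, rfl⟩
    refine interior_maximal
      (t := {z : affineSpan ℝ (convexHull ℝ (range p)) | ∀ i, 0 < c i z}) (fun z hz => ?_) ?_ hy0
    · refine hc.mem_convexHull_iff.2 ⟨?_, fun i => (hz i).le⟩
      simpa only [affineSpan_convexHull] using z.2
    · simp only [ofPred_forall]
      exact isOpen_iInter_of_finite fun i => isOpen_lt continuous_const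
        ((c i).continuous_of_finiteDimensional.comp continuous_subtype_val)

theorem mem_intrinsicInterior_union_iff {n : ℕ} {c : Fin (n + 1) → E →ᵃ[ℝ] ℝ}
    {x : Fin (n + 1) → E} (hc : IsBarycentricCoords c x) {y : E}
    (hy : y ∈ convexHull ℝ (range x)) :
    y ∈ intrinsicInterior ℝ (convexHull ℝ (range x)) ∪
        intrinsicInterior ℝ (convexHull ℝ (range fun i : Fin n => x i.succ)) ↔
      ∀ i : Fin n, 0 < c i.succ y := by
  rw [mem_union, hc.mem_intrinsicInterior_convexHull_iff,
    (hc.comp (Fin.succ_injective n)).mem_intrinsicInterior_convexHull_iff]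
  refine ⟨by rintro (⟨-, h⟩ | ⟨-, h⟩); exacts [fun i => h i.succ, h], fun h => ?_⟩
  obtain ⟨hyS, hy0⟩ := hc.mem_convexHull_iff.1 hy
  rcases (hy0 0).lt_or_eq with h0 | h0
  · exact Or.inl ⟨hyS, Fin.cases h0 h⟩
  · refine Or.inr ⟨?_, h⟩
    obtain ⟨hsum, hrec⟩ := hc.sum_smul_of_mem_affineSpan hyS
    rw [Fin.sum_univ_succ, ← h0, zero_add] at hsum
    rw [Fin.sum_univ_succ, ← h0, zero_smul, zero_add] at hrec
    exact hrec ▸ sum_smul_mem_affineSpan hsum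

end Topological

end IsBarycentricCoords

end BarycentricCoords

section CollapseFlow

variable {E : Type*} [NormedAddCommGroup E] [NormedSpace ℝ E]

open Classical in
noncomputable def collapseFlow (A : Set E) (u : E → ℝ) (d : E) (p : E × ℝ) : E :=
  if p.1 ∈ A then p.1 + (max (u p.1) p.2 - u p.1) • d else p.1

variable {A Q : Set E} {u : E → ℝ} {d y : E} {t : ℝ}

theorem collapseFlow_of_mem (hy : y ∈ A) :
    collapseFlow A u d (y, t) = y + (max (u y) t - u y) • d := if_pos hy

theorem collapseFlow_of_notMem (hy : y ∉ A) : collapseFlow A u d (y, t) = y := if_neg hy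

theorem collapseFlow_of_le (hy : y ∈ A) (ht : t ≤ u y) : collapseFlow A u d (y, t) = y := by
  simp [collapseFlow_of_mem hy, max_eq_left ht]

theorem collapseFlow_eq_self_of_mem (hQu : ∀ q ∈ Q ∩ A, u q = 1) (hy : y ∈ Q) (ht : t ≤ 1) :
    collapseFlow A u d (y, t) = y := by
  by_cases hyA : y ∈ A
  · exact collapseFlow_of_le hyA (by rwa [hQu y ⟨hy, hyA⟩])
  · exact collapseFlow_of_notMem hyA

theorem continuousOn_collapseFlow (hA : IsClosed A) (hQ : IsClosed Q) (hu : ContinuousOn u A)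
    (hQu : ∀ q ∈ Q ∩ A, u q = 1) :
    ContinuousOn (collapseFlow A u d) ((Q ∪ A) ×ˢ Icc 0 1) := by
  have hon_A : ContinuousOn (collapseFlow A u d) (A ×ˢ univ) := by
    refine ContinuousOn.congr ?_ fun p hp => collapseFlow_of_mem hp.1
    have hu' : ContinuousOn (fun p : E × ℝ => u p.1) (A ×ˢ univ) :=
      hu.comp continuousOn_fst fun p hp => hp.1
    exact continuousOn_fst.add (((ContinuousOn.sup hu' continuousOn_snd).sub hu').smul
      continuousOn_const)
  have hon_Q : ContinuousOn (collapseFlow A u d) (Q ×ˢ Iic 1) :=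
    continuousOn_fst.congr fun p hp => collapseFlow_eq_self_of_mem hQu hp.1 hp.2
  refine (hon_Q.union_of_isClosed hon_A (hQ.prod isClosed_Iic) (hA.prod isClosed_univ)).mono ?_
  rintro p ⟨hp | hp, -, hp1⟩
  exacts [Or.inl ⟨hp, hp1⟩, Or.inr ⟨hp, trivial⟩]

variable (hu1 : ∀ y ∈ A, u y ≤ 1)
  (hflow : ∀ y ∈ A, ∀ τ, 0 ≤ τ → τ ≤ 1 - u y → y + τ • d ∈ A)
  (hud : ∀ y τ, u (y + τ • d) = u y + τ)
include hu1 hflow hud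

theorem collapseFlow_mem_and_apply (hy : y ∈ A) (ht : t ≤ 1) :
    collapseFlow A u d (y, t) ∈ A ∧ u (collapseFlow A u d (y, t)) = max (u y) t := by
  rw [collapseFlow_of_mem hy]
  refine ⟨hflow y hy _ (sub_nonneg.2 (le_max_left _ _)) ?_, by rw [hud]; ring⟩
  linarith [max_le (hu1 y hy) ht]

theorem collapseFlow_collapseFlow (hy : y ∈ A) {s : ℝ} (hs : s ≤ 1) :
    collapseFlow A u d (collapseFlow A u d (y, s), t) = collapseFlow A u d (y, max s t) := by
  obtain ⟨hyA, hyu⟩ := collapseFlow_mem_and_apply hu1 hflow hud hy hs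
  rw [collapseFlow_of_mem hyA, hyu, collapseFlow_of_mem hy, collapseFlow_of_mem hy, max_assoc,
    add_assoc, ← add_smul]
  ring_nf

theorem isFreeDefRetr_collapseFlow (hA : IsClosed A) (hQ : IsClosed Q) (hu : ContinuousOn u A)
    (hu0 : ∀ y ∈ A, 0 ≤ u y) (hQA : ∀ y ∈ A, y ∈ Q ↔ u y = 1) :
    IsFreeDefRetr (Q ∪ A) Q (collapseFlow A u d) := by
  have hQu : ∀ q ∈ Q ∩ A, u q = 1 := fun q hq => (hQA q hq.2).1 hq.1
  refine ⟨continuousOn_collapseFlow hA hQ hu hQu, ?_, ?_, ?_,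
    fun q hq t ht => collapseFlow_eq_self_of_mem hQu hq ht.2, ?_⟩
  · rintro ⟨y, t⟩ ⟨hy, -, ht⟩
    by_cases hyA : y ∈ A
    · exact Or.inr (collapseFlow_mem_and_apply hu1 hflow hud hyA ht).1
    · rwa [collapseFlow_of_notMem hyA]
  · intro y hy
    by_cases hyA : y ∈ A
    · exact collapseFlow_of_le hyA (hu0 y hyA)
    · exact collapseFlow_of_notMem hyA
  · refine Subset.antisymm ?_ fun q hq => ⟨(q, 1), ⟨Or.inl hq, rfl⟩,
      collapseFlow_eq_self_of_mem hQu hq le_rfl⟩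
    rintro - ⟨⟨y, t⟩, ⟨hy, rfl : t = 1⟩, rfl⟩
    by_cases hyA : y ∈ A
    · obtain ⟨hfA, hfu⟩ := collapseFlow_mem_and_apply hu1 hflow hud hyA le_rfl
      exact (hQA _ hfA).2 (hfu.trans (max_eq_right (hu1 y hyA)))
    · rw [collapseFlow_of_notMem hyA]
      exact hy.resolve_right hyA
  · rintro y - s ⟨-, hs⟩ t -
    by_cases hyA : y ∈ A
    · exact collapseFlow_collapseFlow hu1 hflow hud hyA hs
    · simp only [collapseFlow_of_notMem hyA]

end CollapseFlow

section SimplexCollapse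

variable {E : Type*} [NormedAddCommGroup E] [NormedSpace ℝ E] {n : ℕ} [NeZero n]

noncomputable def minFaceCoord (c : Fin (n + 1) → E →ᵃ[ℝ] ℝ) (y : E) : ℝ :=
  Finset.univ.inf' Finset.univ_nonempty fun i : Fin n => c i.succ y

noncomputable def collapseStart (c : Fin (n + 1) → E →ᵃ[ℝ] ℝ) (y : E) : ℝ :=
  1 - n * minFaceCoord c y

noncomputable def collapseDir (x : Fin (n + 1) → E) : E :=
  x 0 - ∑ i : Fin n, (n : ℝ)⁻¹ • x i.succ

theorem minFaceCoord_le (c : Fin (n + 1) → E →ᵃ[ℝ] ℝ) (y : E) (i : Fin n) :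
    minFaceCoord c y ≤ c i.succ y :=
  Finset.inf'_le _ (Finset.mem_univ i)

theorem continuous_collapseStart [FiniteDimensional ℝ E] (c : Fin (n + 1) → E →ᵃ[ℝ] ℝ) :
    Continuous (collapseStart c) :=
  continuous_const.sub <| continuous_const.mul <| Continuous.finset_inf'_apply _
    fun i _ => (c i.succ).continuous_of_finiteDimensional

variable {x : Fin (n + 1) → E} {c : Fin (n + 1) → E →ᵃ[ℝ] ℝ} {y : E}

theorem AffineMap.apply_add_smul_collapseDir (f : E →ᵃ[ℝ] ℝ) (τ : ℝ) :
    f (y + τ • collapseDir x) = f y + τ * (f (x 0) - ∑ i : Fin n, (n : ℝ)⁻¹ * f (x i.succ)) := by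
  have hw : ∑ _ : Fin n, (n : ℝ)⁻¹ = 1 := by simp [NeZero.ne]
  rw [collapseDir, AffineMap.apply_add_smul_sub, AffineMap.apply_sum_smul _ hw]
  rfl

namespace IsBarycentricCoords

variable (hc : IsBarycentricCoords c x)
include hc

theorem apply_succ_add_smul_collapseDir (i : Fin n) (τ : ℝ) :
    c i.succ (y + τ • collapseDir x) = c i.succ y - τ / n := by
  have h0 : c i.succ (x 0) = 0 := by simp [hc _ _, Fin.succ_ne_zero]
  have hface : ∑ j : Fin n, (n : ℝ)⁻¹ * c i.succ (x j.succ) = (n : ℝ)⁻¹ := by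
    simp [hc _ _, Fin.succ_inj]
  rw [AffineMap.apply_add_smul_collapseDir, h0, hface]
  ring

theorem apply_zero_add_smul_collapseDir (τ : ℝ) :
    c 0 (y + τ • collapseDir x) = c 0 y + τ := by
  simp [AffineMap.apply_add_smul_collapseDir, hc _ _, (Fin.succ_ne_zero _).symm]

theorem minFaceCoord_add_smul_collapseDir (τ : ℝ) :
    minFaceCoord c (y + τ • collapseDir x) = minFaceCoord c y - τ / n := by
  simp only [minFaceCoord, hc.apply_succ_add_smul_collapseDir]
  exact (Finset.apply_inf'_eq_inf'_comp _ (· - τ / n)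
    fun a b => (min_sub_sub_right a b _).symm).symm

theorem collapseStart_add_smul_collapseDir (τ : ℝ) :
    collapseStart c (y + τ • collapseDir x) = collapseStart c y + τ := by
  rw [collapseStart, collapseStart, hc.minFaceCoord_add_smul_collapseDir]
  field_simp [NeZero.ne]
  ring

variable (hy : y ∈ convexHull ℝ (range x))
include hy

theorem minFaceCoord_nonneg : 0 ≤ minFaceCoord c y :=
  Finset.le_inf' _ _ fun i _ => (hc.mem_convexHull_iff.1 hy).2 i.succ

theorem mul_minFaceCoord_le : n * minFaceCoord c y ≤ 1 - c 0 y := by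
  have hsum := (hc.sum_smul_of_mem_affineSpan (hc.mem_convexHull_iff.1 hy).1).1
  rw [Fin.sum_univ_succ] at hsum
  calc n * minFaceCoord c y = ∑ _ : Fin n, minFaceCoord c y := by simp
    _ ≤ ∑ i : Fin n, c i.succ y := Finset.sum_le_sum fun i _ => minFaceCoord_le c y i
    _ = 1 - c 0 y := by linarith

theorem collapseStart_nonneg : 0 ≤ collapseStart c y := by
  rw [collapseStart]
  linarith [hc.mul_minFaceCoord_le hy, (hc.mem_convexHull_iff.1 hy).2 0]

theorem collapseStart_le_one : collapseStart c y ≤ 1 := by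
  rw [collapseStart]
  linarith [mul_nonneg (Nat.cast_nonneg n) (hc.minFaceCoord_nonneg hy)]

theorem add_smul_collapseDir_mem {τ : ℝ} (hτ0 : 0 ≤ τ) (hτ : τ ≤ 1 - collapseStart c y) :
    y + τ • collapseDir x ∈ convexHull ℝ (range x) := by
  obtain ⟨hyS, hy0⟩ := hc.mem_convexHull_iff.1 hy
  have hb : ∑ i : Fin n, (n : ℝ)⁻¹ • x i.succ ∈ affineSpan ℝ (range x) :=
    affineSpan_mono ℝ (range_subset_iff.2 fun i : Fin n => mem_range_self i.succ)
      (sum_smul_mem_affineSpan (by simp [NeZero.ne]))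
  refine hc.mem_convexHull_iff.2 ⟨?_, Fin.cases ?_ fun i => ?_⟩
  · have h :=
      AffineSubspace.smul_vsub_vadd_mem _ τ (subset_affineSpan ℝ _ (mem_range_self 0)) hb hyS
    rwa [vadd_eq_add, vsub_eq_sub, add_comm _ y] at h
  · rw [hc.apply_zero_add_smul_collapseDir]
    linarith [hy0 0]
  · rw [hc.apply_succ_add_smul_collapseDir, sub_nonneg,
      div_le_iff₀ (Nat.cast_pos.2 (Nat.pos_of_neZero n))]
    rw [collapseStart, sub_sub_cancel] at hτ
    nlinarith [mul_le_mul_of_nonneg_left (minFaceCoord_le c y i) (Nat.cast_nonneg (α := ℝ) n)]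

theorem collapseStart_eq_one_iff [FiniteDimensional ℝ E] :
    collapseStart c y = 1 ↔ y ∉ intrinsicInterior ℝ (convexHull ℝ (range x)) ∪
        intrinsicInterior ℝ (convexHull ℝ (range fun i : Fin n => x i.succ)) := by
  have hpos : (∀ i : Fin n, 0 < c i.succ y) ↔ 0 < minFaceCoord c y := by
    simp [minFaceCoord, Finset.lt_inf'_iff]
  rw [hc.mem_intrinsicInterior_union_iff hy, hpos, not_lt, collapseStart, sub_eq_self,
    mul_eq_zero, or_iff_right (Nat.cast_ne_zero.2 (NeZero.ne n))]
  exact ⟨le_of_eq, fun h => le_antisymm h (hc.minFaceCoord_nonneg hy)⟩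

end IsBarycentricCoords

end SimplexCollapse

/-- If `A = conv {x₀, …, xₙ}` (`n ≥ 1`, the `xᵢ` affinely independent) with
`B = conv {x₁, …, xₙ}` the face opposite `x₀`, `Q` is compact, `P = Q ∪ A` and
`Q ∩ A = A \ (ri A ∪ ri B)`, then there is a free deformation retraction of `P` onto `Q`
(this is an elementary collapse `P ↘ Q` across `A` from the free face `B`). -/
theorem stmt_7 {E : Type*} [NormedAddCommGroup E] [NormedSpace ℝ E] [FiniteDimensional ℝ E]
    {n : ℕ} (hn : 1 ≤ n) (x : Fin (n + 1) → E) (hx : AffineIndependent ℝ x)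
    (A B : Set E) (hA : A = convexHull ℝ (Set.range x))
    (hB : B = convexHull ℝ (x '' {i | i ≠ 0}))
    (Q P : Set E) (hQ : IsCompact Q) (hP : P = Q ∪ A)
    (hQA : Q ∩ A = A \ (intrinsicInterior ℝ A ∪ intrinsicInterior ℝ B)) :
    ∃ h : E × ℝ → E, IsFreeDefRetr P Q h := by
  have : NeZero n := ⟨by omega⟩
  obtain ⟨c, hc⟩ := hx.exists_isBarycentricCoords
  have hB' : B = convexHull ℝ (range fun i : Fin n => x i.succ) := by
    rw [hB, show {i : Fin (n + 1) | i ≠ 0} = range Fin.succ from (Fin.range_succ n).symm,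
      ← range_comp]
    rfl
  subst hA hB' hP
  refine ⟨_, isFreeDefRetr_collapseFlow (fun y hy => hc.collapseStart_le_one hy)
    (fun y hy τ => hc.add_smul_collapseDir_mem hy) (fun y => hc.collapseStart_add_smul_collapseDir)
    ((finite_range x).isCompact_convexHull (𝕜 := ℝ)).isClosed hQ.isClosed
    (continuous_collapseStart c).continuousOn (fun y hy => hc.collapseStart_nonneg hy)
    fun y hy => ?_⟩
  rw [hc.collapseStart_eq_one_iff hy]
  simpa [hy] using Set.ext_iff.1 hQA y
end

section
/- Let x₀, …, xₙ be affinely independent points of E, let A := conv{x₀, …, xₙ}, and let F : E → E' be an affine map. If F is not injective on A, then F(A) = F(∂A), where ∂A := A \ ri A is the relative boundary of A. -/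
/-!
If `F` is affine and `F a = F b` for distinct `a, b ∈ A`, then `F` is constant along the direction
`v = b - a`, which lies in the direction of the affine span of `A`. Pushing any point `p ∈ A` along
`v` as far as compactness allows ends at a point of `A` with the same image; it is not in the
relative interior, since from there one could still move a little further along `v` inside `A`.
-/

open Set Filter Topology

section IntrinsicInterior

variable {E : Type*} [AddCommGroup E] [Module ℝ E] [TopologicalSpace E]
  [IsTopologicalAddGroup E] [ContinuousSMul ℝ E]

theorem eventually_add_smul_mem_of_mem_intrinsicInterior {A : Set E} {q v : E}
    (hq : q ∈ intrinsicInterior ℝ A) (hv : v ∈ (affineSpan ℝ A).direction) :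
    ∀ᶠ s in 𝓝 (0 : ℝ), q + s • v ∈ A := by
  obtain ⟨y, hy, rfl⟩ := hq
  let line : ℝ → affineSpan ℝ A := fun s =>
    ⟨s • v + y, AffineSubspace.vadd_mem_of_mem_direction (Submodule.smul_mem _ s hv) y.2⟩
  have hline : Continuous line := by fun_prop
  have h0 : line 0 = y := by ext; simp [line]
  have : ∀ᶠ s in 𝓝 (0 : ℝ), line s ∈ interior ((↑) ⁻¹' A) :=
    hline.continuousAt.preimage_mem_nhds (h0 ▸ isOpen_interior.mem_nhds hy)
  filter_upwards [this] with s hs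
  simpa [line, add_comm] using interior_subset hs

theorem exists_add_smul_mem_diff_intrinsicInterior [T2Space E] {A : Set E} (hA : IsCompact A)
    {p v : E} (hp : p ∈ A) (hv : v ∈ (affineSpan ℝ A).direction) (hv0 : v ≠ 0) :
    ∃ t : ℝ, p + t • v ∈ A \ intrinsicInterior ℝ A := by
  set S : Set ℝ := (fun t : ℝ => p + t • v) ⁻¹' A
  have hS : IsCompact S :=
    ((Homeomorph.addLeft p).isClosedEmbedding.comp
      (isClosedEmbedding_smul_left hv0)).isCompact_preimage hA
  have htS : sSup S ∈ S := hS.sSup_mem ⟨0, by simpa [S] using hp⟩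
  refine ⟨sSup S, htS, fun hri => ?_⟩
  obtain ⟨s, hsA, hs⟩ : ∃ s : ℝ, p + sSup S • v + s • v ∈ A ∧ 0 < s :=
    ((eventually_add_smul_mem_of_mem_intrinsicInterior hri hv).filter_mono
      (nhdsWithin_le_nhds (s := Ioi 0))).and self_mem_nhdsWithin |>.exists
  have : sSup S + s ∈ S := by simpa [S, add_smul, add_assoc] using hsA
  linarith [le_csSup hS.bddAbove this]

theorem AffineMap.image_eq_image_diff_intrinsicInterior_of_not_injOn {E' : Type*}
    [AddCommGroup E'] [Module ℝ E'] [T2Space E] (F : E →ᵃ[ℝ] E') {A : Set E} (hA : IsCompact A)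
    (hF : ¬ InjOn F A) : F '' A = F '' (A \ intrinsicInterior ℝ A) := by
  obtain ⟨a, ha, b, hb, hFab, hab⟩ : ∃ a ∈ A, ∃ b ∈ A, F a = F b ∧ a ≠ b := by
    simpa [InjOn] using hF
  have hv : b -ᵥ a ∈ (affineSpan ℝ A).direction :=
    AffineSubspace.vsub_mem_direction (subset_affineSpan ℝ A hb) (subset_affineSpan ℝ A ha)
  have hFv : F.linear (b -ᵥ a) = 0 := by rw [F.linearMap_vsub, hFab, vsub_self]
  refine (image_mono sdiff_subset).antisymm' ?_
  rintro _ ⟨p, hp, rfl⟩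
  obtain ⟨t, ht⟩ := exists_add_smul_mem_diff_intrinsicInterior hA hp hv (vsub_ne_zero.2 hab.symm)
  refine ⟨_, ht, ?_⟩
  rw [add_comm, ← vadd_eq_add, F.map_vadd, map_smul, hFv, smul_zero, zero_vadd]

end IntrinsicInterior

theorem stmt_8_general {E E' : Type*}
    [NormedAddCommGroup E] [NormedSpace ℝ E]
    [NormedAddCommGroup E'] [NormedSpace ℝ E']
    {n : ℕ} (x : Fin (n + 1) → E)
    (A : Set E) (hA : A = convexHull ℝ (Set.range x))
    (F : E →ᵃ[ℝ] E') (hF : ¬ Set.InjOn F A) :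
    F '' A = F '' (A \ intrinsicInterior ℝ A) := by
  subst hA
  exact F.image_eq_image_diff_intrinsicInterior_of_not_injOn
    ((finite_range x).isCompact_convexHull (𝕜 := ℝ)) hF

/-- If an affine map `F` is not injective on a simplex `A = conv {x₀, …, xₙ}`, then
`F '' A = F '' ∂A`, where `∂A = A \ ri A` is the relative boundary of `A`. -/
theorem stmt_8 {E E' : Type*}
    [NormedAddCommGroup E] [NormedSpace ℝ E] [FiniteDimensional ℝ E]
    [NormedAddCommGroup E'] [NormedSpace ℝ E'] [FiniteDimensional ℝ E']
    {n : ℕ} (x : Fin (n + 1) → E) (hx : AffineIndependent ℝ x)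
    (A : Set E) (hA : A = convexHull ℝ (Set.range x))
    (F : E →ᵃ[ℝ] E') (hF : ¬ Set.InjOn F A) :
    F '' A = F '' (A \ intrinsicInterior ℝ A) :=
  stmt_8_general x A hA F hF
end

section
/- Let x₀, …, xₙ be affinely independent points of E, let A := conv{x₀, …, xₙ}, and let F : E → E' be an affine map that is not injective on A. Then for every i ∈ {0,…,n}, letting Bᵢ := conv({x₀,…,xₙ} \ {xᵢ}) be the corresponding codimension-one face of A, one has F(A) = F(A \ (ri A ∪ ri Bᵢ)); equivalently, F(A) = F(∂A \ ri Bᵢ). -/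
/-!
Non-injectivity of `F` on the simplex `A` yields a nonzero weight vector `μ` with `∑ μⱼ = 0`
along which `F` is constant: `F (∑ (lⱼ + t μⱼ) xⱼ) = F (∑ lⱼ xⱼ)`. Replacing `μ` by `-μ` we may
assume `μᵢ ≥ 0`. Starting from the barycentric weights `l` of any point of `A` and moving in
direction `μ` until the first weight vanishes, the vanishing weight has index `k` with `μₖ < 0`,
so `k ≠ i`. A point of `A` whose `k`-th weight is zero lies neither in `ri A` nor, as `xₖ` is a
vertex of `Bᵢ`, in `ri Bᵢ`: otherwise one could move slightly beyond it away from `xₖ` and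
stay in `A`, making the `k`-th weight negative.
-/

open Set Filter Topology Finset

theorem eventually_lineMap_mem_of_mem_intrinsicInterior {V : Type*} [AddCommGroup V]
    [Module ℝ V] [TopologicalSpace V] [IsTopologicalAddGroup V] [ContinuousSMul ℝ V]
    {s : Set V} {p q : V} (hp : p ∈ intrinsicInterior ℝ s) (hq : q ∈ affineSpan ℝ s) :
    ∀ᶠ t in 𝓝 (1 : ℝ), AffineMap.lineMap q p t ∈ s := by
  obtain ⟨z, hz, rfl⟩ := mem_intrinsicInterior.mp hp
  let c : ℝ → affineSpan ℝ s := fun t => ⟨AffineMap.lineMap q z t, AffineMap.lineMap_mem t hq z.2⟩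
  have hc : Continuous c := AffineMap.lineMap_continuous.subtype_mk _
  have hc1 : c 1 = z := Subtype.ext (AffineMap.lineMap_apply_one _ _)
  exact (hc.continuousAt.eventually_mem (isOpen_interior.mem_nhds (hc1 ▸ hz))).mono
    fun _ ht => interior_subset (s := ((↑) : affineSpan ℝ s → V) ⁻¹' s) ht

section Weights

variable {ι 𝕜 : Type*} [Fintype ι] [Field 𝕜] [LinearOrder 𝕜] [IsStrictOrderedRing 𝕜]

theorem exists_neg_of_sum_eq_zero {μ : ι → 𝕜} (hμ : μ ≠ 0) (hsum : ∑ j, μ j = 0) :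
    ∃ j, μ j < 0 := by
  by_contra! h
  exact hμ ((Fintype.sum_eq_zero_iff_of_nonneg h).mp hsum)

theorem exists_add_smul_nonneg_eq_zero {l μ : ι → 𝕜} (hl : 0 ≤ l) (hμ : ∃ j, μ j < 0) :
    ∃ t : 𝕜, 0 ≤ l + t • μ ∧ ∃ k, μ k < 0 ∧ (l + t • μ) k = 0 := by
  classical
  obtain ⟨k, hk, hmin⟩ := (univ.filter (μ · < 0)).exists_min_image (fun j => l j / -μ j)
    (by simpa [Finset.Nonempty] using hμ)
  have hμk : μ k < 0 := (Finset.mem_filter.mp hk).2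
  set t := l k / -μ k
  have ht : 0 ≤ t := div_nonneg (hl k) (neg_nonneg.mpr hμk.le)
  refine ⟨t, fun j => ?_, k, hμk, ?_⟩
  · simp only [Pi.zero_apply, Pi.add_apply, Pi.smul_apply, smul_eq_mul]
    rcases lt_or_ge (μ j) 0 with hμj | hμj
    · have := hmin j (by simpa using hμj)
      rw [le_div_iff₀ (neg_pos.mpr hμj)] at this
      linarith
    · nlinarith [show 0 ≤ l j from hl j, mul_nonneg ht hμj]
  · simp only [Pi.add_apply, Pi.smul_apply, smul_eq_mul, t]
    field_simp [hμk.ne]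
    ring

end Weights

theorem AffineMap.map_affineCombination_univ {k ι V V' : Type*} [Ring k] [Fintype ι]
    [AddCommGroup V] [Module k V] [AddCommGroup V'] [Module k V'] (F : V →ᵃ[k] V')
    (x : ι → V) {w : ι → k} (hw : ∑ j, w j = 1) :
    F (univ.affineCombination k x w) = ∑ j, w j • F (x j) := by
  rw [univ.map_affineCombination x w hw, univ.affineCombination_eq_linear_combination _ _ hw]
  rfl

namespace Affine.Simplex

variable {V V' : Type*} [AddCommGroup V] [Module ℝ V] [AddCommGroup V'] [Module ℝ V'] {n : ℕ}

theorem affineCombination_notMem_intrinsicInterior [TopologicalSpace V] [IsTopologicalAddGroup V]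
    [ContinuousSMul ℝ V] (s : Simplex ℝ V n) {C : Set V}
    (hC : C ⊆ convexHull ℝ (range s.points)) {k : Fin (n + 1)} (hk : s.points k ∈ affineSpan ℝ C)
    {w : Fin (n + 1) → ℝ} (hw : ∑ j, w j = 1) (hwk : w k = 0) :
    univ.affineCombination ℝ s.points w ∉ intrinsicInterior ℝ C := by
  intro hp
  obtain ⟨t, htC, ht⟩ := ((eventually_lineMap_mem_of_mem_intrinsicInterior hp hk).filter_mono
    nhdsWithin_le_nhds |>.and (self_mem_nhdsWithin (s := Ioi 1))).exists
  set v : Fin (n + 1) → ℝ := AffineMap.lineMap (Pi.single k 1) w t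
  have hv : ∑ j, v j = 1 := by
    simp [v, AffineMap.lineMap_apply_module, Finset.sum_add_distrib, ← Finset.mul_sum, hw]
  have hvC : univ.affineCombination ℝ s.points v ∈ s.closedInterior := by
    rw [← univ.lineMap_affineCombination,
      univ.affineCombination_of_eq_one_of_eq_zero _ _ (mem_univ k) (by simp)
        fun j _ hj => Pi.single_eq_of_ne hj _,
      ← convexHull_eq_closedInterior]
    exact hC htC
  have hvk := ((affineCombination_mem_closedInterior_iff hv).mp hvC k).1
  simp only [v, AffineMap.lineMap_apply_module, Pi.add_apply, Pi.smul_apply, Pi.single_eq_same,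
    hwk, smul_eq_mul] at hvk
  linarith [show (1 : ℝ) < t from ht]

theorem exists_weights_ne_zero_of_not_injOn (s : Simplex ℝ V n) {F : V →ᵃ[ℝ] V'}
    (hF : ¬ InjOn F (convexHull ℝ (range s.points))) :
    ∃ μ : Fin (n + 1) → ℝ, μ ≠ 0 ∧ ∑ j, μ j = 0 ∧ ∑ j, μ j • F (s.points j) = 0 := by
  simp only [convexHull_eq_closedInterior, InjOn, not_forall] at hF
  obtain ⟨_, ⟨α, hα, -, rfl⟩, _, ⟨β, hβ, -, rfl⟩, hFab, hab⟩ := hF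
  refine ⟨β - α, fun h => hab ?_, by simp [Finset.sum_sub_distrib, hα, hβ], ?_⟩
  · rw [sub_eq_zero.mp h]
  · rw [F.map_affineCombination_univ _ hα, F.map_affineCombination_univ _ hβ] at hFab
    simp [sub_smul, Finset.sum_sub_distrib, hFab]

theorem exists_weights_eq_zero_ne_of_not_injOn (s : Simplex ℝ V n) {F : V →ᵃ[ℝ] V'}
    (hF : ¬ InjOn F (convexHull ℝ (range s.points))) (i : Fin (n + 1)) {p : V}
    (hp : p ∈ convexHull ℝ (range s.points)) :
    ∃ w : Fin (n + 1) → ℝ, 0 ≤ w ∧ ∑ j, w j = 1 ∧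
      F (univ.affineCombination ℝ s.points w) = F p ∧ ∃ k ≠ i, w k = 0 := by
  rw [convexHull_eq_closedInterior] at hp
  obtain ⟨l, hl, hl01, rfl⟩ := hp
  obtain ⟨μ, hμ, hμsum, hFμ⟩ := s.exists_weights_ne_zero_of_not_injOn hF
  wlog hμi : 0 ≤ μ i generalizing μ
  · exact this (-μ) (neg_ne_zero.mpr hμ) (by simp [hμsum]) (by simp [hFμ])
      (neg_nonneg.mpr (not_le.mp hμi).le)
  obtain ⟨t, hw, k, hμk, hwk⟩ := exists_add_smul_nonneg_eq_zero (fun j => (hl01 j).1)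
    (exists_neg_of_sum_eq_zero hμ hμsum)
  have hw1 : ∑ j, (l + t • μ) j = 1 := by
    simp [Finset.sum_add_distrib, ← Finset.mul_sum, hl, hμsum]
  refine ⟨l + t • μ, hw, hw1, ?_, k, fun hki => (hki ▸ hμk).not_ge hμi, hwk⟩
  rw [F.map_affineCombination_univ _ hw1, F.map_affineCombination_univ _ hl]
  simp [add_smul, mul_smul, Finset.sum_add_distrib, ← Finset.smul_sum, hFμ]

end Affine.Simplex

theorem stmt_9_general {E E' : Type*}
    [NormedAddCommGroup E] [NormedSpace ℝ E]
    [NormedAddCommGroup E'] [NormedSpace ℝ E']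
    {n : ℕ} (x : Fin (n + 1) → E) (hx : AffineIndependent ℝ x)
    (A : Set E) (hA : A = convexHull ℝ (Set.range x))
    (F : E →ᵃ[ℝ] E') (hF : ¬ Set.InjOn F A) :
    ∀ i : Fin (n + 1),
      F '' A =
        F '' (A \ (intrinsicInterior ℝ A ∪
          intrinsicInterior ℝ (convexHull ℝ (x '' {j | j ≠ i})))) := by
  intro i
  subst hA
  let s : Affine.Simplex ℝ E n := ⟨x, hx⟩
  refine (image_mono sdiff_subset).antisymm' ?_
  rintro _ ⟨p, hp, rfl⟩
  obtain ⟨w, hw0, hw1, hFw, k, hki, hwk⟩ := s.exists_weights_eq_zero_ne_of_not_injOn hF i hp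
  refine ⟨_, ⟨affineCombination_mem_convexHull (fun j _ => hw0 j) hw1, ?_⟩, hFw⟩
  rintro (hA | hB)
  · exact s.affineCombination_notMem_intrinsicInterior subset_rfl
      (subset_affineSpan ℝ _ (subset_convexHull ℝ _ (mem_range_self k))) hw1 hwk hA
  · exact s.affineCombination_notMem_intrinsicInterior (convexHull_mono (image_subset_range _ _))
      (subset_affineSpan ℝ _ (subset_convexHull ℝ _ ⟨k, hki, rfl⟩)) hw1 hwk hB

/-- If an affine map `F` is not injective on the simplex `A = conv {x₀, …, xₙ}`, then for
every codimension-one face `Bᵢ = conv ({x₀, …, xₙ} \ {xᵢ})` one has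
`F '' A = F '' (A \ (ri A ∪ ri Bᵢ))`, i.e. `F '' A = F '' (∂A \ ri Bᵢ)`. -/
theorem stmt_9 {E E' : Type*}
    [NormedAddCommGroup E] [NormedSpace ℝ E] [FiniteDimensional ℝ E]
    [NormedAddCommGroup E'] [NormedSpace ℝ E'] [FiniteDimensional ℝ E']
    {n : ℕ} (x : Fin (n + 1) → E) (hx : AffineIndependent ℝ x)
    (A : Set E) (hA : A = convexHull ℝ (Set.range x))
    (F : E →ᵃ[ℝ] E') (hF : ¬ Set.InjOn F A) :
    ∀ i : Fin (n + 1),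
      F '' A =
        F '' (A \ (intrinsicInterior ℝ A ∪
          intrinsicInterior ℝ (convexHull ℝ (x '' {j | j ≠ i})))) :=
  stmt_9_general x hx A hA F hF
end
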